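/- arXiv:0812.0041 — 2 statements merged into one kernel-verified Lean document; each statement's English description precedes it below -/
import Mathlib

section
/- The function D_ω(M) = (-1)^{n-1} · ω̄ⁿ · det(M - ωI₂ₙ) is real-valued for all ω on the unit circle and all M ∈ Sp(2n). -/
/-!
Since `M` is real, conjugating `det (M - ω)` gives `det (M - ω̄)`. Multiplying `Mᵀ J M = J` by
`M - ω` and using `det M = 1` shows that the characteristic polynomial of a symplectic matrix is
palindromic: `det (M - ω) = ω ^ (2n) * det (M - ω̄)` when `ω ω̄ = 1`. Hence the conjugate of
`ω̄ ^ n * det (M - ω)` is `ω ^ n * det (M - ω̄) = ω̄ ^ n * det (M - ω)`.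
-/

open Matrix

/-- The standard symplectic matrix J on ℝ^{2n}. -/
def Jmat (n : ℕ) : Matrix (Fin n ⊕ Fin n) (Fin n ⊕ Fin n) ℝ :=
  Matrix.fromBlocks 0 (-1) 1 0

/-- M is symplectic: MᵀJM = J. -/
def IsSymplectic {n : ℕ} (M : Matrix (Fin n ⊕ Fin n) (Fin n ⊕ Fin n) ℝ) : Prop :=
  Mᵀ * Jmat n * M = Jmat n

theorem isSymplectic_iff_mem_symplecticGroup {n : ℕ}
    {M : Matrix (Fin n ⊕ Fin n) (Fin n ⊕ Fin n) ℝ} :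
    IsSymplectic M ↔ M ∈ symplecticGroup (Fin n) ℝ :=
  SymplecticGroup.mem_iff'.symm

namespace SymplecticGroup

variable {l R : Type*} [Fintype l] [DecidableEq l] [CommRing R]

theorem det_sub_smul_one_eq_pow_mul {A : Matrix (l ⊕ l) (l ⊕ l) R}
    (hA : A ∈ symplecticGroup l R) {t u : R} (htu : t * u = 1) :
    (A - t • 1).det = t ^ (2 * Fintype.card l) * (A - u • 1).det := by
  have key : Aᵀ * J l R * (A - t • 1) = (-t) • ((Aᵀ - u • 1) * J l R) := by
    rw [Matrix.mul_sub, mem_iff'.mp hA]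
    simp only [Matrix.sub_mul, Matrix.mul_smul, Matrix.smul_mul, Matrix.mul_one, Matrix.one_mul]
    linear_combination (norm := module) -(htu • J l R)
  have hdet := congrArg det key
  rw [det_mul, det_mul, det_transpose, det_eq_one hA, one_mul, det_smul, det_mul,
    ← det_transpose (Aᵀ - u • 1), transpose_sub, transpose_transpose, transpose_smul,
    transpose_one, Fintype.card_sum, ← two_mul, Even.neg_pow (even_two_mul _)] at hdet
  exact (isUnit_det_J l R).mul_left_cancel (by linear_combination hdet)

end SymplecticGroup

theorem conj_det_map_ofReal_sub_smul_one {ι : Type*} [Fintype ι] [DecidableEq ι]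
    (M : Matrix ι ι ℝ) (z : ℂ) :
    starRingEnd ℂ (M.map Complex.ofReal - z • 1).det =
      (M.map Complex.ofReal - starRingEnd ℂ z • 1).det := by
  rw [RingHom.map_det, RingHom.mapMatrix_apply]
  congr 1
  ext i j
  by_cases h : i = j <;> simp [h]

/-- D_ω(M) = (-1)^{n-1} ω̄ⁿ det(M - ωI) is real for |ω| = 1 and M symplectic. -/
theorem stmt_7 {n : ℕ} (M : Matrix (Fin n ⊕ Fin n) (Fin n ⊕ Fin n) ℝ)
    (hM : IsSymplectic M) (ω : ℂ) (hω : ‖ω‖ = 1) :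
    ((-1 : ℂ) ^ (n - 1) * (starRingEnd ℂ ω) ^ n *
      (M.map (Complex.ofReal) - ω • 1).det).im = 0 := by
  have hωω : ω * starRingEnd ℂ ω = 1 := by
    rw [Complex.mul_conj', hω]
    norm_num
  have hA : M.map Complex.ofReal ∈ symplecticGroup (Fin n) ℂ :=
    SymplecticGroup.map_mem (isSymplectic_iff_mem_symplecticGroup.mp hM) Complex.ofRealHom
  have hpal := SymplecticGroup.det_sub_smul_one_eq_pow_mul hA hωω
  rw [Fintype.card_fin] at hpal
  have hpow : (ω * starRingEnd ℂ ω) ^ n = 1 := by rw [hωω, one_pow]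
  rw [← Complex.conj_eq_iff_im, map_mul, map_mul, map_pow, map_pow, map_neg, map_one,
    Complex.conj_conj, conj_det_map_ofReal_sub_smul_one, hpal]
  linear_combination
    -((-1) ^ (n - 1) * ω ^ n * (M.map Complex.ofReal - starRingEnd ℂ ω • 1).det) * hpow
end

section
/- If y: ℝ → ℝ^{2n} is a continuous τ-periodic curve whose image satisfies O(y) ∩ O(-y) ≠ ∅, where y solves ẏ = JH'(y) for an even C¹ Hamiltonian H with uniqueness of solutions, and τ is the minimal period, then y(t) = -y(t + τ/2) for all t ∈ ℝ. -/
/-!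
Since `H` is even, `∇H` is odd, so `t ↦ -y (t + c)` solves the same equation as `y`. Choosing
`c = t₂ - t₁`, the two solutions agree at `t₁`, and uniqueness makes `c` an antiperiod of `y`.
Reducing `c` modulo `τ` gives an antiperiod `r ∈ [0, τ)`, so `2r` is a period, and minimality of
`τ` forces `2r = τ` (when `r = 0`, `y = -y` means `y = 0`).
-/

open Matrix

theorem HasGradientAt.eq_neg_of_even {E : Type*} [NormedAddCommGroup E] [InnerProductSpace ℝ E]
    [CompleteSpace E] {f : E → ℝ} (heven : ∀ x, f (-x) = f x) {a b x : E}
    (ha : HasGradientAt f a x) (hb : HasGradientAt f b (-x)) : b = -a := by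
  have hcomp : HasFDerivAt (fun v => f (-v))
      ((InnerProductSpace.toDual ℝ E b).comp (-ContinuousLinearMap.id ℝ E)) x :=
    hb.hasFDerivAt.comp x (hasFDerivAt_id x).neg
  have hdual : InnerProductSpace.toDual ℝ E (-b) =
      (InnerProductSpace.toDual ℝ E b).comp (-ContinuousLinearMap.id ℝ E) := by
    ext v
    simp
  have hneg : HasGradientAt f (-b) x := by
    rw [hasGradientAt_iff_hasFDerivAt, hdual]
    simpa only [funext heven] using hcomp
  rw [ha.unique hneg, neg_neg]

theorem hasDerivAt_neg_comp_add_const {E : Type*} [NormedAddCommGroup E] [NormedSpace ℝ E]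
    {F : E → E} (hF : ∀ x, F (-x) = -F x) {y : ℝ → E} (hy : ∀ t, HasDerivAt y (F (y t)) t)
    (c : ℝ) : ∀ t, HasDerivAt (fun t => -y (t + c)) (F (-y (t + c))) t := fun t => by
  rw [hF]
  exact ((hy (t + c)).comp_add_const t c).neg

namespace Function

variable {α β : Type*} {f : α → β} {c p : α}

theorem Antiperiodic.exists_mem_Ico_of_periodic [AddCommGroup α] [LinearOrder α]
    [IsOrderedAddMonoid α] [Archimedean α] [Neg β] (hp : 0 < p) (hper : Periodic f p)
    (hanti : Antiperiodic f c) : ∃ r ∈ Set.Ico 0 p, Antiperiodic f r :=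
  ⟨toIcoMod hp 0 c, toIcoMod_mem_Ico' hp c, fun x => by
    rw [← self_sub_toIcoDiv_zsmul, ← add_sub_assoc, (hper.zsmul _).sub_eq, hanti]⟩

theorem Antiperiodic.half_of_minimal_period [Field α] [LinearOrder α] [IsStrictOrderedRing α]
    [Archimedean α] [AddCommGroup β] [IsAddTorsionFree β] (hp : 0 < p) (hper : Periodic f p)
    (hmin : ∀ q, 0 < q → q < p → ¬Periodic f q) (hanti : Antiperiodic f c) :
    Antiperiodic f (p / 2) := by
  obtain ⟨r, ⟨hr0, hrp⟩, hr⟩ := hanti.exists_mem_Ico_of_periodic hp hper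
  rcases hr0.eq_or_lt with rfl | hr0
  · have hzero : ∀ t, f t = 0 := fun t => self_eq_neg.mp (by simpa using hr t)
    intro t
    simp [hzero]
  · have h2r : Periodic f (r + r) := hr.add hr
    rcases lt_trichotomy (r + r) p with hlt | heq | hgt
    · exact absurd h2r (hmin _ (by linarith) hlt)
    · rwa [show p / 2 = r by linarith]
    · exact absurd (h2r.sub_period hper) (hmin _ (by linarith) (by linarith))

end Function

theorem stmt_15_general {n : ℕ} (τ : ℝ) (hτ : 0 < τ)
    (H : EuclideanSpace ℝ (Fin n ⊕ Fin n) → ℝ)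
    (g : EuclideanSpace ℝ (Fin n ⊕ Fin n) → EuclideanSpace ℝ (Fin n ⊕ Fin n))
    (hgrad : ∀ x, HasGradientAt H (g x) x)
    (heven : ∀ x, H (-x) = H x)
    (y : ℝ → EuclideanSpace ℝ (Fin n ⊕ Fin n))
    (hy : ∀ t : ℝ, HasDerivAt y
      (Matrix.toEuclideanLin (Jmat n) (g (y t))) t)
    -- uniqueness of solutions of the ODE ẋ = J∇H(x):
    (huniq : ∀ z w : ℝ → EuclideanSpace ℝ (Fin n ⊕ Fin n),
      (∀ t : ℝ, HasDerivAt z (Matrix.toEuclideanLin (Jmat n) (g (z t))) t) →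
      (∀ t : ℝ, HasDerivAt w (Matrix.toEuclideanLin (Jmat n) (g (w t))) t) →
      (∃ t₀ : ℝ, z t₀ = w t₀) → z = w)
    -- τ is the minimal period of y:
    (hper : Function.Periodic y τ)
    (hmin : ∀ τ' : ℝ, 0 < τ' → τ' < τ → ¬ Function.Periodic y τ')
    -- the orbits of y and -y intersect:
    (hint : ∃ t₁ t₂ : ℝ, y t₁ = -(y t₂)) :
    ∀ t : ℝ, y t = -(y (t + τ / 2)) := by
  obtain ⟨t₁, t₂, hy₁₂⟩ := hint
  let F := fun x => Matrix.toEuclideanLin (Jmat n) (g x)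
  have hodd : ∀ x, F (-x) = -F x := fun x => by
    simp only [F, (hgrad x).eq_neg_of_even heven (hgrad (-x)), map_neg]
  have hsol : y = fun t => -y (t + (t₂ - t₁)) :=
    huniq _ _ hy (hasDerivAt_neg_comp_add_const hodd hy _) ⟨t₁, by simpa using hy₁₂⟩
  have hanti : Function.Antiperiodic y (t₂ - t₁) := fun t =>
    (neg_eq_iff_eq_neg.mpr (congrFun hsol t)).symm
  have := IsAddTorsionFree.of_isTorsionFree ℝ (EuclideanSpace ℝ (Fin n ⊕ Fin n))
  exact fun t => neg_eq_iff_eq_neg.mp ((hanti.half_of_minimal_period hτ hper hmin) t).symm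

/-- If y is a τ-periodic solution of ẏ = J∇H(y) with H even and C¹,
solutions of the ODE are unique given an initial value, τ is the minimal
period of y, and the orbits O(y), O(-y) intersect, then
y(t) = -y(t + τ/2) for all t. -/
theorem stmt_15 {n : ℕ} (τ : ℝ) (hτ : 0 < τ)
    (H : EuclideanSpace ℝ (Fin n ⊕ Fin n) → ℝ)
    (g : EuclideanSpace ℝ (Fin n ⊕ Fin n) → EuclideanSpace ℝ (Fin n ⊕ Fin n))
    (hgrad : ∀ x, HasGradientAt H (g x) x)
    (heven : ∀ x, H (-x) = H x)
    (y : ℝ → EuclideanSpace ℝ (Fin n ⊕ Fin n))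
    (hcont : Continuous y)
    (hy : ∀ t : ℝ, HasDerivAt y
      (Matrix.toEuclideanLin (Jmat n) (g (y t))) t)
    -- uniqueness of solutions of the ODE ẋ = J∇H(x):
    (huniq : ∀ z w : ℝ → EuclideanSpace ℝ (Fin n ⊕ Fin n),
      (∀ t : ℝ, HasDerivAt z (Matrix.toEuclideanLin (Jmat n) (g (z t))) t) →
      (∀ t : ℝ, HasDerivAt w (Matrix.toEuclideanLin (Jmat n) (g (w t))) t) →
      (∃ t₀ : ℝ, z t₀ = w t₀) → z = w)
    -- τ is the minimal period of y:
    (hper : Function.Periodic y τ)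
    (hmin : ∀ τ' : ℝ, 0 < τ' → τ' < τ → ¬ Function.Periodic y τ')
    -- the orbits of y and -y intersect:
    (hint : ∃ t₁ t₂ : ℝ, y t₁ = -(y t₂)) :
    ∀ t : ℝ, y t = -(y (t + τ / 2)) :=
  stmt_15_general τ hτ H g hgrad heven y hy huniq hper hmin hint
end
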